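/- Let n, τ, U be as in the context, let γ : [0,s₀] → U be a geodesic curve, and assume Δτ(γ(0)) = 0. Then for every s ∈ [0,s₀]: Δτ(γ(s)) / (2·n(γ(s))²) ≤ 3·n₀₀²·s. (Inequality (6.19) in the proof of Theorem 3.1.) -/

import Mathlib

/-!
Along a geodesic `d/ds f(γ) = ⟨∇τ, ∇f⟩ / n²`. Differentiating the eikonal equation once gives
`D²τ ∇τ = n ∇n`, and twice gives `⟨∇τ, ∇Δτ⟩ = |∇n|² + n Δn - |D²τ|²`. Hence
`F = Δτ(γ) / (2n(γ)²)` has derivative `(n ⟨∇τ, ∇Δτ⟩ - 2 Δτ ⟨∇τ, ∇n⟩) / (2n⁵)`, and the matrix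
inequality `|Mg|² - 2 (tr M) ⟨g, Mg⟩ ≤ |g|² |M|²` for `M = D²τ`, `g = ∇τ` bounds it by
`Δn / (2n³) ≤ 3 n₀₀²`. Since `F(0) = 0`, the mean value theorem concludes.
-/

open Real Set

/-- The partial derivative `∂_{x_i} f` of `f : ℝ³ → ℝ`. -/
noncomputable def pd (i : Fin 3) (f : (Fin 3 → ℝ) → ℝ) (x : Fin 3 → ℝ) : ℝ :=
  fderiv ℝ f x (Pi.single i 1)

/-- The Laplacian `Δ f = Σᵢ ∂_{x_i}² f`. -/
noncomputable def lap (f : (Fin 3 → ℝ) → ℝ) (x : Fin 3 → ℝ) : ℝ :=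
  ∑ i : Fin 3, pd i (pd i f) x

open Filter Topology

namespace Matrix

theorem mulVec_dotProduct_mulVec_le {m n : Type*} [Fintype m] [Fintype n]
    (B : Matrix m n ℝ) (g : n → ℝ) :
    B *ᵥ g ⬝ᵥ B *ᵥ g ≤ (∑ i, ∑ j, B i j ^ 2) * (g ⬝ᵥ g) :=
  calc B *ᵥ g ⬝ᵥ B *ᵥ g = ∑ i, (∑ j, B i j * g j) ^ 2 := by simp only [dotProduct, mulVec, sq]
    _ ≤ ∑ i, (∑ j, B i j ^ 2) * ∑ j, g j ^ 2 :=
      Finset.sum_le_sum fun i _ ↦ Finset.sum_mul_sq_le_sq_mul_sq _ _ _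
    _ = _ := by simp only [Finset.sum_mul, dotProduct, sq]

-- For `B = (tr M) • 1 - M` the defect is `|g|² ‖B‖² - |Bg|² + (3 - card ι) |g|² (tr M)²`,
-- nonnegative by Cauchy–Schwarz.
theorem mulVec_dotProduct_sub_trace_le {ι : Type*} [Fintype ι] [DecidableEq ι]
    (hι : Fintype.card ι ≤ 3) (M : Matrix ι ι ℝ) (g : ι → ℝ) :
    M *ᵥ g ⬝ᵥ M *ᵥ g - 2 * M.trace * (g ⬝ᵥ M *ᵥ g) ≤ (g ⬝ᵥ g) * ∑ i, ∑ j, M i j ^ 2 := by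
  set T := M.trace
  have hB := (T • (1 : Matrix ι ι ℝ) - M).mulVec_dotProduct_mulVec_le g
  have hfrob : ∑ i, ∑ j, (T • (1 : Matrix ι ι ℝ) - M) i j ^ 2
      = (Fintype.card ι - 2) * T ^ 2 + ∑ i, ∑ j, M i j ^ 2 := by
    simp only [sub_apply, smul_apply, one_apply, smul_eq_mul, sub_sq, mul_ite, mul_one, mul_zero,
      ite_pow, ite_mul, zero_mul, ne_eq, OfNat.ofNat_ne_zero, not_false_eq_true, zero_pow,
      Finset.sum_add_distrib, Finset.sum_sub_distrib, Finset.sum_ite_eq, Finset.mem_univ, if_true,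
      Finset.sum_const, Finset.card_univ, nsmul_eq_mul, ← Finset.mul_sum]
    rw [show ∑ i, M i i = T from rfl]
    ring
  have hvec : (T • (1 : Matrix ι ι ℝ) - M) *ᵥ g ⬝ᵥ (T • (1 : Matrix ι ι ℝ) - M) *ᵥ g
      = T ^ 2 * (g ⬝ᵥ g) - 2 * T * (g ⬝ᵥ M *ᵥ g) + M *ᵥ g ⬝ᵥ M *ᵥ g := by
    simp only [sub_mulVec, smul_mulVec, one_mulVec, sub_dotProduct, dotProduct_sub,
      smul_dotProduct, dotProduct_smul, smul_eq_mul, dotProduct_comm (M *ᵥ g) g]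
    ring
  have hcard : (Fintype.card ι : ℝ) ≤ 3 := by exact_mod_cast hι
  have hg : 0 ≤ g ⬝ᵥ g := Finset.sum_nonneg fun i _ ↦ mul_self_nonneg (g i)
  rw [hfrob, hvec] at hB
  nlinarith [mul_nonneg (mul_nonneg hg (sq_nonneg T)) (sub_nonneg.2 hcard)]

end Matrix

theorem image_sub_le_mul_sub_of_hasDerivWithinAt_le {f f' : ℝ → ℝ} {a b C : ℝ}
    (hf : ∀ x ∈ Icc a b, HasDerivWithinAt f (f' x) (Icc a b) x)
    (hf'C : ∀ x ∈ Icc a b, f' x ≤ C) {x : ℝ} (hx : x ∈ Icc a b) : f x - f a ≤ C * (x - a) := by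
  refine (convex_Icc a b).image_sub_le_mul_sub_of_deriv_le
    (fun y hy ↦ (hf y hy).continuousWithinAt)
    (fun y hy ↦ ((hf y (interior_subset hy)).differentiableWithinAt).mono interior_subset)
    (fun y hy ↦ ?_) a (left_mem_Icc.2 (hx.1.trans hx.2)) x hx hx.1
  rw [((hf y (interior_subset hy)).hasDerivAt (mem_interior_iff_mem_nhds.1 hy)).deriv]
  exact hf'C y (interior_subset hy)

section PartialDerivatives

variable {f g : (Fin 3 → ℝ) → ℝ} {x : Fin 3 → ℝ}

theorem Filter.EventuallyEq.pd_eq (h : f =ᶠ[𝓝 x] g) (i : Fin 3) : pd i f x = pd i g x := by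
  rw [pd, pd, h.fderiv_eq]

theorem ContDiffAt.contDiffAt_pd {m k : WithTop ℕ∞} (hf : ContDiffAt ℝ k f x) (hmk : m + 1 ≤ k)
    (i : Fin 3) : ContDiffAt ℝ m (pd i f) x :=
  (hf.fderiv_right hmk).clm_apply contDiffAt_const

theorem ContDiffAt.differentiableAt_pd {k : WithTop ℕ∞} (hf : ContDiffAt ℝ k f x) (hk : 2 ≤ k)
    (i : Fin 3) : DifferentiableAt ℝ (pd i f) x :=
  (hf.contDiffAt_pd (m := 1) hk i).differentiableAt one_ne_zero

theorem fderiv_apply_eq_sum_pd (v : Fin 3 → ℝ) : fderiv ℝ f x v = ∑ i, v i * pd i f x := by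
  conv_lhs => rw [pi_eq_sum_univ' v]
  simp [pd, smul_eq_mul]

theorem DifferentiableAt.hasDerivWithinAt_comp_sum_pd {γ : ℝ → Fin 3 → ℝ} {v : Fin 3 → ℝ}
    {s : Set ℝ} {t : ℝ} (hf : DifferentiableAt ℝ f (γ t)) (hγ : HasDerivWithinAt γ v s t) :
    HasDerivWithinAt (fun u ↦ f (γ u)) (∑ i, v i * pd i f (γ t)) s t := by
  rw [← fderiv_apply_eq_sum_pd]
  exact hf.hasFDerivAt.comp_hasDerivWithinAt t hγ

theorem pd_mul (hf : DifferentiableAt ℝ f x) (hg : DifferentiableAt ℝ g x) (j : Fin 3) :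
    pd j (fun y ↦ f y * g y) x = pd j f x * g x + f x * pd j g x := by
  simp [pd, fderiv_fun_mul hf hg]
  ring

theorem pd_sq (hf : DifferentiableAt ℝ f x) (j : Fin 3) :
    pd j (fun y ↦ f y ^ 2) x = 2 * f x * pd j f x := by
  simp only [sq, pd_mul hf hf]
  ring

theorem pd_sum {f : Fin 3 → (Fin 3 → ℝ) → ℝ} (hf : ∀ i, DifferentiableAt ℝ (f i) x) (j : Fin 3) :
    pd j (fun y ↦ ∑ i, f i y) x = ∑ i, pd j (f i) x := by
  simp [pd, fderiv_fun_sum fun i _ ↦ hf i]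

theorem ContDiffAt.pd_pd_comm (hf : ContDiffAt ℝ 2 f x) (i j : Fin 3) :
    pd i (pd j f) x = pd j (pd i f) x := by
  have hsymm : IsSymmSndFDerivAt ℝ f x :=
    hf.isSymmSndFDerivAt (by simp [minSmoothness_of_isRCLikeNormedField])
  have hdiff : DifferentiableAt ℝ (fderiv ℝ f) x :=
    (hf.fderiv_right (m := 1) (by norm_num)).differentiableAt one_ne_zero
  have hsnd : ∀ a b : Fin 3,
      pd a (pd b f) x = fderiv ℝ (fderiv ℝ f) x (Pi.single a 1) (Pi.single b 1) := by
    intro a b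
    change fderiv ℝ (fun y ↦ fderiv ℝ f y (Pi.single b 1)) x (Pi.single a 1) = _
    rw [fderiv_clm_apply hdiff (differentiableAt_const _)]
    simp
  rw [hsnd, hsnd, hsymm]

theorem ContDiffAt.pd_lap (hf : ContDiffAt ℝ 3 f x) (i : Fin 3) :
    pd i (lap f) x = lap (pd i f) x := by
  have hcomm : ∀ j, pd j (pd i f) =ᶠ[𝓝 x] pd i (pd j f) := fun j ↦
    (hf.eventually (by simp)).mono fun y hy ↦ (hy.of_le (by norm_num)).pd_pd_comm j i
  change pd i (fun y ↦ ∑ j, pd j (pd j f) y) x = ∑ j, pd j (pd j (pd i f)) x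
  rw [pd_sum fun j ↦ (hf.contDiffAt_pd (m := 2) le_rfl j).differentiableAt_pd le_rfl j]
  refine Finset.sum_congr rfl fun j _ ↦ ?_
  rw [(hcomm j).pd_eq j]
  exact (hf.contDiffAt_pd (m := 2) le_rfl j).pd_pd_comm i j

end PartialDerivatives

theorem lap_le_of_abs_pd_pd_le {f : (Fin 3 → ℝ) → ℝ} {x : Fin 3 → ℝ} {K : ℝ}
    (h : ∀ i, |pd i (pd i f) x| ≤ K) : lap f x ≤ 3 * K := by
  simp only [lap, Fin.sum_univ_three]
  linarith [(abs_le.1 (h 0)).2, (abs_le.1 (h 1)).2, (abs_le.1 (h 2)).2]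

section Eikonal

variable {n τ : (Fin 3 → ℝ) → ℝ} {U : Set (Fin 3 → ℝ)} {x : Fin 3 → ℝ}

theorem eikonal_hessian_mul_grad (hU : IsOpen U) (hn : ContDiff ℝ 2 n) (hτ : ContDiffOn ℝ 3 τ U)
    (heik : ∀ x ∈ U, ∑ i : Fin 3, (pd i τ x) ^ 2 = (n x) ^ 2) (hx : x ∈ U) (j : Fin 3) :
    ∑ i, pd j (pd i τ) x * pd i τ x = n x * pd j n x := by
  have hdτ : ∀ i, DifferentiableAt ℝ (pd i τ) x := fun i ↦
    (hτ.contDiffAt (hU.mem_nhds hx)).differentiableAt_pd (by norm_num) i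
  have h := (eventuallyEq_of_mem (hU.mem_nhds hx) heik).pd_eq j
  rw [pd_sum (f := fun i y ↦ pd i τ y ^ 2) fun i ↦ (hdτ i).pow 2,
    pd_sq (hn.differentiable two_ne_zero x)] at h
  have hsum : ∑ i, pd j (fun y ↦ pd i τ y ^ 2) x = 2 * ∑ i, pd j (pd i τ) x * pd i τ x := by
    rw [Finset.mul_sum]
    exact Finset.sum_congr rfl fun i _ ↦ by rw [pd_sq (hdτ i)]; ring
  linarith

theorem eikonal_grad_dot_grad_lap (hU : IsOpen U) (hn : ContDiff ℝ 2 n) (hτ : ContDiffOn ℝ 3 τ U)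
    (heik : ∀ x ∈ U, ∑ i : Fin 3, (pd i τ x) ^ 2 = (n x) ^ 2) (hx : x ∈ U) :
    ∑ k, pd k τ x * pd k (lap τ) x
      = ∑ j, pd j n x ^ 2 + n x * lap n x - ∑ i, ∑ j, pd i (pd j τ) x ^ 2 := by
  have hτx : ContDiffAt ℝ 3 τ x := hτ.contDiffAt (hU.mem_nhds hx)
  have hdτ : ∀ i, DifferentiableAt ℝ (pd i τ) x := fun i ↦ hτx.differentiableAt_pd (by norm_num) i
  have hd2τ : ∀ i j, DifferentiableAt ℝ (pd j (pd i τ)) x := fun i j ↦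
    (hτx.contDiffAt_pd (m := 2) le_rfl i).differentiableAt_pd le_rfl j
  have hdn : DifferentiableAt ℝ n x := hn.differentiable two_ne_zero x
  have hd2n : ∀ j, DifferentiableAt ℝ (pd j n) x := fun j ↦
    hn.contDiffAt.differentiableAt_pd le_rfl j
  have hrow : ∀ j, ∑ i, pd j (pd j (pd i τ)) x * pd i τ x
      = pd j n x ^ 2 + n x * pd j (pd j n) x - ∑ i, pd j (pd i τ) x ^ 2 := by
    intro j
    have h := (eventuallyEq_of_mem (hU.mem_nhds hx) fun y hy ↦
      eikonal_hessian_mul_grad hU hn hτ heik hy j).pd_eq j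
    rw [pd_sum (f := fun i y ↦ pd j (pd i τ) y * pd i τ y) fun i ↦ (hd2τ i j).mul (hdτ i),
      pd_mul hdn (hd2n j)] at h
    simp only [pd_mul (hd2τ _ j) (hdτ _), Finset.sum_add_distrib] at h
    rw [eq_sub_iff_add_eq]
    simpa only [sq] using h
  calc ∑ k, pd k τ x * pd k (lap τ) x = ∑ j, ∑ i, pd j (pd j (pd i τ)) x * pd i τ x := by
        simp only [hτx.pd_lap, lap, Finset.mul_sum]
        rw [Finset.sum_comm]
        exact Finset.sum_congr rfl fun j _ ↦ Finset.sum_congr rfl fun i _ ↦ mul_comm _ _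
    _ = _ := by
        simp only [hrow, Finset.sum_sub_distrib, Finset.sum_add_distrib, ← Finset.mul_sum, lap]

open Matrix in
theorem eikonal_lap_transport_le (hU : IsOpen U) (hn : ContDiff ℝ 2 n) (hτ : ContDiffOn ℝ 3 τ U)
    (heik : ∀ x ∈ U, ∑ i : Fin 3, (pd i τ x) ^ 2 = (n x) ^ 2) (hx : x ∈ U) (hnx : 0 < n x) :
    n x * ∑ k, pd k τ x * pd k (lap τ) x - 2 * lap τ x * ∑ i, pd i τ x * pd i n x
      ≤ n x ^ 2 * lap n x := by
  set M : Matrix (Fin 3) (Fin 3) ℝ := of fun i j ↦ pd i (pd j τ) x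
  set g : Fin 3 → ℝ := fun i ↦ pd i τ x
  have hMg : M *ᵥ g = n x • fun j ↦ pd j n x :=
    funext fun j ↦ eikonal_hessian_mul_grad hU hn hτ heik hx j
  have hgg : g ⬝ᵥ g = n x ^ 2 := by simpa only [dotProduct, ← sq] using heik x hx
  have hMgMg : M *ᵥ g ⬝ᵥ M *ᵥ g = n x ^ 2 * ∑ j, pd j n x ^ 2 := by
    rw [hMg, smul_dotProduct, dotProduct_smul]
    simp only [dotProduct, smul_eq_mul, ← sq]
    ring
  have hgMg : g ⬝ᵥ M *ᵥ g = n x * ∑ i, pd i τ x * pd i n x := by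
    rw [hMg, dotProduct_smul]
    rfl
  have key := M.mulVec_dotProduct_sub_trace_le (by simp) g
  rw [hMgMg, hgMg, hgg, show M.trace = lap τ x from rfl,
    show ∑ i, ∑ j, M i j ^ 2 = ∑ i, ∑ j, pd i (pd j τ) x ^ 2 from rfl] at key
  have hdefect : n x * (n x * (∑ j, pd j n x ^ 2 - ∑ i, ∑ j, pd i (pd j τ) x ^ 2)
      - 2 * lap τ x * ∑ i, pd i τ x * pd i n x) ≤ 0 := by
    linarith
  rw [eikonal_grad_dot_grad_lap hU hn hτ heik hx]
  linarith [nonpos_of_mul_nonpos_right hdefect hnx]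

theorem exists_hasDerivWithinAt_lap_div_le_along_geodesic (hU : IsOpen U)
    (hn : ContDiff ℝ 2 n) (hτ : ContDiffOn ℝ 3 τ U)
    (heik : ∀ x ∈ U, ∑ i : Fin 3, (pd i τ x) ^ 2 = (n x) ^ 2) {γ : ℝ → Fin 3 → ℝ} {S : Set ℝ}
    {t : ℝ} (hγt : γ t ∈ U) (hnγt : 0 < n (γ t))
    (hγ : HasDerivWithinAt γ (fun i ↦ pd i τ (γ t) / n (γ t) ^ 2) S t) :
    ∃ d ≤ lap n (γ t) / (2 * n (γ t) ^ 3),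
      HasDerivWithinAt (fun s ↦ lap τ (γ s) / (2 * n (γ s) ^ 2)) d S t := by
  have hτx : ContDiffAt ℝ 3 τ (γ t) := hτ.contDiffAt (hU.mem_nhds hγt)
  have hlap : DifferentiableAt ℝ (lap τ) (γ t) :=
    DifferentiableAt.fun_sum fun i _ ↦
      (hτx.contDiffAt_pd (m := 2) le_rfl i).differentiableAt_pd le_rfl i
  have hA := hlap.hasDerivWithinAt_comp_sum_pd hγ
  have hB := (hn.differentiable two_ne_zero (γ t)).hasDerivWithinAt_comp_sum_pd hγ
  refine ⟨_, ?_, hA.div ((hB.pow 2).const_mul 2) (by positivity)⟩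
  have hrate := eikonal_lap_transport_le hU hn hτ heik hγt hnγt
  simp only [div_mul_eq_mul_div, ← Finset.sum_div]
  set ν := n (γ t)
  calc _ = (ν * ∑ k, pd k τ (γ t) * pd k (lap τ) (γ t)
        - 2 * lap τ (γ t) * ∑ i, pd i τ (γ t) * pd i n (γ t)) / (2 * ν ^ 5) := by
        field_simp
        ring
    _ ≤ ν ^ 2 * lap n (γ t) / (2 * ν ^ 5) := by gcongr
    _ = lap n (γ t) / (2 * ν ^ 3) := by field_simp

end Eikonal

theorem stmt3_general
    (n₀₀ : ℝ)
    (n : (Fin 3 → ℝ) → ℝ) (hn : ContDiff ℝ 2 n)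
    (hn1 : ∀ x, 1 ≤ n x)
    (hb0 : ∀ x, |n x| ≤ n₀₀)
    (hb2 : ∀ x, ∀ i j : Fin 3, |pd i (pd j n) x| ≤ n₀₀)
    (U : Set (Fin 3 → ℝ)) (hU : IsOpen U)
    (τ : (Fin 3 → ℝ) → ℝ) (hτ : ContDiffOn ℝ 3 τ U)
    (heik : ∀ x ∈ U, ∑ i : Fin 3, (pd i τ x) ^ 2 = (n x) ^ 2)
    (s₀ : ℝ) (γ : ℝ → (Fin 3 → ℝ))
    (hγU : ∀ s ∈ Icc 0 s₀, γ s ∈ U)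
    (hgeo : ∀ s ∈ Icc 0 s₀,
      HasDerivWithinAt γ (fun i => pd i τ (γ s) / (n (γ s)) ^ 2) (Icc 0 s₀) s)
    (hinit : lap τ (γ 0) = 0) :
    ∀ s ∈ Icc 0 s₀, lap τ (γ s) / (2 * n (γ s) ^ 2) ≤ 3 * n₀₀ ^ 2 * s := by
  have hK : 1 ≤ n₀₀ := (hn1 (γ 0)).trans ((le_abs_self _).trans (hb0 _))
  have hrate : ∀ t ∈ Icc 0 s₀, ∃ d ≤ 3 * n₀₀ ^ 2,
      HasDerivWithinAt (fun s ↦ lap τ (γ s) / (2 * n (γ s) ^ 2)) d (Icc 0 s₀) t := by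
    intro t ht
    have hν := hn1 (γ t)
    obtain ⟨d, hd, hF⟩ := exists_hasDerivWithinAt_lap_div_le_along_geodesic hU hn hτ heik
      (hγU t ht) (by linarith) (hgeo t ht)
    refine ⟨d, hd.trans ?_, hF⟩
    have hL := lap_le_of_abs_pd_pd_le fun i ↦ hb2 (γ t) i i
    rw [div_le_iff₀ (by positivity)]
    nlinarith [one_le_pow₀ hν (n := 3)]
  choose! d hd hF using hrate
  intro s hs
  simpa [hinit] using image_sub_le_mul_sub_of_hasDerivWithinAt_le hF hd hs

theorem stmt3
    (n₀ n₀₀ : ℝ) (hn₀ : 1 < n₀) (hn₀n₀₀ : n₀ < n₀₀)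
    (n : (Fin 3 → ℝ) → ℝ) (hn : ContDiff ℝ 2 n)
    (hn1 : ∀ x, 1 ≤ n x) (hn2 : ∀ x, n x ≤ n₀)
    (hb0 : ∀ x, |n x| ≤ n₀₀)
    (hb1 : ∀ x, ∀ i : Fin 3, |pd i n x| ≤ n₀₀)
    (hb2 : ∀ x, ∀ i j : Fin 3, |pd i (pd j n) x| ≤ n₀₀)
    (U : Set (Fin 3 → ℝ)) (hU : IsOpen U)
    (τ : (Fin 3 → ℝ) → ℝ) (hτ : ContDiffOn ℝ 3 τ U)
    (heik : ∀ x ∈ U, ∑ i : Fin 3, (pd i τ x) ^ 2 = (n x) ^ 2)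
    (s₀ : ℝ) (hs₀ : 0 ≤ s₀) (γ : ℝ → (Fin 3 → ℝ))
    (hγU : ∀ s ∈ Icc 0 s₀, γ s ∈ U)
    (hgeo : ∀ s ∈ Icc 0 s₀,
      HasDerivWithinAt γ (fun i => pd i τ (γ s) / (n (γ s)) ^ 2) (Icc 0 s₀) s)
    (hinit : lap τ (γ 0) = 0) :
    ∀ s ∈ Icc 0 s₀, lap τ (γ s) / (2 * n (γ s) ^ 2) ≤ 3 * n₀₀ ^ 2 * s :=
  stmt3_general n₀₀ n hn hn1 hb0 hb2 U hU τ hτ heik s₀ γ hγU hgeo hinit
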